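/- The graded ℚ-algebra R_N has Hilbert series 1 + t + 3t² + 3t³ + 3t⁴ + t⁵ + t⁶: the dimension over ℚ of the degree-i homogeneous component of R_N is 1, 1, 3, 3, 3, 1, 1 for i = 0,1,2,3,4,5,6 respectively, and 0 for i > 6. -/
import Mathlib


open MvPolynomial

noncomputable section

/-- Variables of ℚ[b₁,b₂,d₂]: `X 0 = b₁`, `X 1 = b₂`, `X 2 = d₂`. -/
abbrev PN := MvPolynomial (Fin 3) ℚ

/-- The ideal presenting the Chow ring of N = N(3;2,3). -/
def J : Ideal PN := Ideal.span
  { X 0 ^ 2 * X 2 - 3 * X 2 ^ 2,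
    X 0 ^ 2 * X 1 - X 1 * X 2 - 3 * X 2 ^ 2,
    X 0 ^ 4 + 3 * X 1 ^ 2 - 9 * X 1 * X 2 - 3 * X 2 ^ 2,
    2 * X 0 * X 1 * X 2 - 3 * X 0 * X 2 ^ 2,
    3 * X 0 * X 1 ^ 2 - 7 * X 0 * X 2 ^ 2 }

/-- The grading weights: deg b₁ = 1, deg b₂ = deg d₂ = 2. -/
def w : Fin 3 → ℕ := ![1, 2, 2]

/-- The degree-`i` homogeneous component of R_N = ℚ[b₁,b₂,d₂]/J,
realized as the image in the quotient of the space of weighted-homogeneous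
polynomials of degree `i`. -/
def component (i : ℕ) : Submodule ℚ (PN ⧸ J) :=
  (weightedHomogeneousSubmodule ℚ w i).map (Ideal.Quotient.mkₐ ℚ J).toLinearMap

def E (a b c : ℕ) : Fin 3 →₀ ℕ :=
  Finsupp.single 0 a + Finsupp.single 1 b + Finsupp.single 2 c

lemma E_apply0 (a b c : ℕ) : E a b c 0 = a := by simp [E, Finsupp.single_apply]
lemma E_apply1 (a b c : ℕ) : E a b c 1 = b := by simp [E, Finsupp.single_apply]
lemma E_apply2 (a b c : ℕ) : E a b c 2 = c := by simp [E, Finsupp.single_apply]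

lemma E_add (a b c a' b' c' : ℕ) : E a b c + E a' b' c' = E (a+a') (b+b') (c+c') := by
  ext i; fin_cases i <;> simp [E, Finsupp.single_apply]

lemma E_eq_iff {a b c a' b' c' : ℕ} : E a b c = E a' b' c' ↔ a = a' ∧ b = b' ∧ c = c' := by
  constructor
  · intro h
    refine ⟨?_, ?_, ?_⟩
    · have := DFunLike.congr_fun h 0
      simpa [E_apply0] using this
    · have := DFunLike.congr_fun h 1
      simpa [E_apply1] using this
    · have := DFunLike.congr_fun h 2
      simpa [E_apply2] using this
  · rintro ⟨rfl, rfl, rfl⟩; rfl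

lemma fin3ext (d : Fin 3 →₀ ℕ) : d = E (d 0) (d 1) (d 2) := by
  ext i; fin_cases i <;> simp [E, Finsupp.single_apply]

lemma weight_E (a b c : ℕ) : (Finsupp.weight w) (E a b c) = a + 2*b + 2*c := by
  simp [E, map_add, Finsupp.weight_apply, Finsupp.sum_single_index, w]
  ring

lemma monoX (a b c : ℕ) (r : ℚ) :
    (monomial (E a b c) r : PN) = C r * X 0 ^ a * X 1 ^ b * X 2 ^ c := by
  rw [X_pow_eq_monomial, X_pow_eq_monomial, X_pow_eq_monomial, C_mul_monomial,
    monomial_mul, monomial_mul, E]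
  ring_nf

lemma mem_J {p q1 q2 q3 q4 q5 : PN}
    (h : p = q1*(X 0 ^ 2 * X 2 - 3 * X 2 ^ 2) + q2*(X 0 ^ 2 * X 1 - X 1 * X 2 - 3 * X 2 ^ 2)
      + q3*(X 0 ^ 4 + 3 * X 1 ^ 2 - 9 * X 1 * X 2 - 3 * X 2 ^ 2)
      + q4*(2 * X 0 * X 1 * X 2 - 3 * X 0 * X 2 ^ 2)
      + q5*(3 * X 0 * X 1 ^ 2 - 7 * X 0 * X 2 ^ 2)) : p ∈ J := by
  rw [h]
  refine Ideal.add_mem _ (Ideal.add_mem _ (Ideal.add_mem _ (Ideal.add_mem _ ?_ ?_) ?_) ?_) ?_ <;>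
    exact Ideal.mul_mem_left _ _ (Ideal.subset_span (by simp))
lemma monoX1 (a b c : ℕ) : (monomial (E a b c) (1:ℚ) : PN) = X 0 ^ a * X 1 ^ b * X 2 ^ c := by
  rw [monoX, map_one, one_mul]

lemma single_add_E0 (a b c : ℕ) : Finsupp.single 0 1 + E a b c = E (a+1) b c := by
  ext i; fin_cases i <;> simp [E, Finsupp.single_apply, Nat.add_comm]
lemma single_add_E1 (a b c : ℕ) : Finsupp.single 1 1 + E a b c = E a (b+1) c := by
  ext i; fin_cases i <;> simp [E, Finsupp.single_apply, Nat.add_comm]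
lemma single_add_E2 (a b c : ℕ) : Finsupp.single 2 1 + E a b c = E a b (c+1) := by
  ext i; fin_cases i <;> simp [E, Finsupp.single_apply, Nat.add_comm]

lemma X0_mul_mono (a b c : ℕ) :
    X 0 * (monomial (E a b c) (1:ℚ) : PN) = monomial (E (a+1) b c) 1 := by
  have hX : (X 0 : PN) = monomial (Finsupp.single 0 1) 1 := by
    rw [← X_pow_eq_monomial, pow_one]
  rw [hX, monomial_mul, one_mul, single_add_E0]

lemma X1_mul_mono (a b c : ℕ) :
    X 1 * (monomial (E a b c) (1:ℚ) : PN) = monomial (E a (b+1) c) 1 := by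
  have hX : (X 1 : PN) = monomial (Finsupp.single 1 1) 1 := by
    rw [← X_pow_eq_monomial, pow_one]
  rw [hX, monomial_mul, one_mul, single_add_E1]

lemma X2_mul_mono (a b c : ℕ) :
    X 2 * (monomial (E a b c) (1:ℚ) : PN) = monomial (E a b (c+1)) 1 := by
  have hX : (X 2 : PN) = monomial (Finsupp.single 2 1) 1 := by
    rw [← X_pow_eq_monomial, pow_one]
  rw [hX, monomial_mul, one_mul, single_add_E2]

lemma mem_J_scaled {p : PN} {L : ℚ} (hL : L ≠ 0) (h : C L * p ∈ J) : p ∈ J := by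
  have hp : p = C L⁻¹ * (C L * p) := by
    rw [← mul_assoc, ← map_mul, inv_mul_cancel₀ hL, map_one, one_mul]
  rw [hp]
  exact Ideal.mul_mem_left _ _ h
def FF : PN := monomial (E 0 3 3) (57 : ℚ) + monomial (E 2 2 3) (27 : ℚ) + monomial (E 2 3 2) (18 : ℚ) + monomial (E 4 1 3) (14 : ℚ) + monomial (E 4 2 2) (9 : ℚ) + monomial (E 4 3 1) (6 : ℚ) + monomial (E 6 0 3) (9 : ℚ) + monomial (E 6 1 2) (5 : ℚ) + monomial (E 6 2 1) (3 : ℚ) + monomial (E 6 3 0) (2 : ℚ)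

lemma FF_def : FF = monomial (E 0 3 3) (57 : ℚ) + monomial (E 2 2 3) (27 : ℚ) + monomial (E 2 3 2) (18 : ℚ) + monomial (E 4 1 3) (14 : ℚ) + monomial (E 4 2 2) (9 : ℚ) + monomial (E 4 3 1) (6 : ℚ) + monomial (E 6 0 3) (9 : ℚ) + monomial (E 6 1 2) (5 : ℚ) + monomial (E 6 2 1) (3 : ℚ) + monomial (E 6 3 0) (2 : ℚ) := rfl

lemma cmb {β : Fin 3 →₀ ℕ} (h0 : β 0 ≤ 6) (h1 : β 1 ≤ 3) (h2 : β 2 ≤ 3)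
    {a b c : ℕ} (h : 6 < a ∨ 3 < b ∨ 3 < c) {r : ℚ} :
    coeff β (monomial (E a b c) r : PN) = 0 := by
  rw [coeff_monomial, if_neg]
  intro he
  rw [← he, E_apply0] at h0
  rw [← he, E_apply1] at h1
  rw [← he, E_apply2] at h2
  omega

lemma hKg1 : ∀ β : Fin 3 →₀ ℕ, β ≤ E 6 3 3 → coeff β ((X 0 ^ 2 * X 2 - 3 * X 2 ^ 2) * FF) = 0 := by
  intro β hβ
  have hle := Finsupp.le_def.mp hβ
  have h0 : β 0 ≤ 6 := by simpa [E_apply0] using hle 0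
  have h1 : β 1 ≤ 3 := by simpa [E_apply1] using hle 1
  have h2 : β 2 ≤ 3 := by simpa [E_apply2] using hle 2
  have hexp : (X 0 ^ 2 * X 2 - 3 * X 2 ^ 2) * FF = monomial (E 0 3 5) ((-171) : ℚ) + monomial (E 2 2 5) ((-81) : ℚ) + monomial (E 2 3 4) (3 : ℚ) + monomial (E 4 1 5) ((-42) : ℚ) + monomial (E 6 0 5) ((-27) : ℚ) + monomial (E 6 1 4) ((-1) : ℚ) + monomial (E 8 0 4) (9 : ℚ) + monomial (E 8 1 3) (5 : ℚ) + monomial (E 8 2 2) (3 : ℚ) + monomial (E 8 3 1) (2 : ℚ) := by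
    rw [FF_def]; simp only [monoX, map_ofNat, map_neg, map_one]; ring
  have z0 : coeff β (monomial (E 0 3 5) ((-171) : ℚ) : PN) = 0 := cmb h0 h1 h2 (by omega)
  have z1 : coeff β (monomial (E 2 2 5) ((-81) : ℚ) : PN) = 0 := cmb h0 h1 h2 (by omega)
  have z2 : coeff β (monomial (E 2 3 4) (3 : ℚ) : PN) = 0 := cmb h0 h1 h2 (by omega)
  have z3 : coeff β (monomial (E 4 1 5) ((-42) : ℚ) : PN) = 0 := cmb h0 h1 h2 (by omega)
  have z4 : coeff β (monomial (E 6 0 5) ((-27) : ℚ) : PN) = 0 := cmb h0 h1 h2 (by omega)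
  have z5 : coeff β (monomial (E 6 1 4) ((-1) : ℚ) : PN) = 0 := cmb h0 h1 h2 (by omega)
  have z6 : coeff β (monomial (E 8 0 4) (9 : ℚ) : PN) = 0 := cmb h0 h1 h2 (by omega)
  have z7 : coeff β (monomial (E 8 1 3) (5 : ℚ) : PN) = 0 := cmb h0 h1 h2 (by omega)
  have z8 : coeff β (monomial (E 8 2 2) (3 : ℚ) : PN) = 0 := cmb h0 h1 h2 (by omega)
  have z9 : coeff β (monomial (E 8 3 1) (2 : ℚ) : PN) = 0 := cmb h0 h1 h2 (by omega)
  simp only [hexp, coeff_add, z0, z1, z2, z3, z4, z5, z6, z7, z8, z9, add_zero, zero_add]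

lemma hKg2 : ∀ β : Fin 3 →₀ ℕ, β ≤ E 6 3 3 → coeff β ((X 0 ^ 2 * X 1 - X 1 * X 2 - 3 * X 2 ^ 2) * FF) = 0 := by
  intro β hβ
  have hle := Finsupp.le_def.mp hβ
  have h0 : β 0 ≤ 6 := by simpa [E_apply0] using hle 0
  have h1 : β 1 ≤ 3 := by simpa [E_apply1] using hle 1
  have h2 : β 2 ≤ 3 := by simpa [E_apply2] using hle 2
  have hexp : (X 0 ^ 2 * X 1 - X 1 * X 2 - 3 * X 2 ^ 2) * FF = monomial (E 0 3 5) ((-171) : ℚ) + monomial (E 0 4 4) ((-57) : ℚ) + monomial (E 2 2 5) ((-81) : ℚ) + monomial (E 2 3 4) ((-81) : ℚ) + monomial (E 2 4 3) (39 : ℚ) + monomial (E 4 1 5) ((-42) : ℚ) + monomial (E 4 2 4) ((-41) : ℚ) + monomial (E 4 4 2) (12 : ℚ) + monomial (E 6 0 5) ((-27) : ℚ) + monomial (E 6 1 4) ((-24) : ℚ) + monomial (E 6 4 1) (4 : ℚ) + monomial (E 8 1 3) (9 : ℚ) + monomial (E 8 2 2) (5 : ℚ) + monomial (E 8 3 1)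 (3 : ℚ) + monomial (E 8 4 0) (2 : ℚ) := by
    rw [FF_def]; simp only [monoX, map_ofNat, map_neg, map_one]; ring
  have z0 : coeff β (monomial (E 0 3 5) ((-171) : ℚ) : PN) = 0 := cmb h0 h1 h2 (by omega)
  have z1 : coeff β (monomial (E 0 4 4) ((-57) : ℚ) : PN) = 0 := cmb h0 h1 h2 (by omega)
  have z2 : coeff β (monomial (E 2 2 5) ((-81) : ℚ) : PN) = 0 := cmb h0 h1 h2 (by omega)
  have z3 : coeff β (monomial (E 2 3 4) ((-81) : ℚ) : PN) = 0 := cmb h0 h1 h2 (by omega)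
  have z4 : coeff β (monomial (E 2 4 3) (39 : ℚ) : PN) = 0 := cmb h0 h1 h2 (by omega)
  have z5 : coeff β (monomial (E 4 1 5) ((-42) : ℚ) : PN) = 0 := cmb h0 h1 h2 (by omega)
  have z6 : coeff β (monomial (E 4 2 4) ((-41) : ℚ) : PN) = 0 := cmb h0 h1 h2 (by omega)
  have z7 : coeff β (monomial (E 4 4 2) (12 : ℚ) : PN) = 0 := cmb h0 h1 h2 (by omega)
  have z8 : coeff β (monomial (E 6 0 5) ((-27) : ℚ) : PN) = 0 := cmb h0 h1 h2 (by omega)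
  have z9 : coeff β (monomial (E 6 1 4) ((-24) : ℚ) : PN) = 0 := cmb h0 h1 h2 (by omega)
  have z10 : coeff β (monomial (E 6 4 1) (4 : ℚ) : PN) = 0 := cmb h0 h1 h2 (by omega)
  have z11 : coeff β (monomial (E 8 1 3) (9 : ℚ) : PN) = 0 := cmb h0 h1 h2 (by omega)
  have z12 : coeff β (monomial (E 8 2 2) (5 : ℚ) : PN) = 0 := cmb h0 h1 h2 (by omega)
  have z13 : coeff β (monomial (E 8 3 1) (3 : ℚ) : PN) = 0 := cmb h0 h1 h2 (by omega)
  have z14 : coeff β (monomial (E 8 4 0) (2 : ℚ) : PN) = 0 := cmb h0 h1 h2 (by omega)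
  simp only [hexp, coeff_add, z0, z1, z2, z3, z4, z5, z6, z7, z8, z9, z10, z11, z12, z13, z14, add_zero, zero_add]

lemma hKg3 : ∀ β : Fin 3 →₀ ℕ, β ≤ E 6 3 3 → coeff β ((X 0 ^ 4 + 3 * X 1 ^ 2 - 9 * X 1 * X 2 - 3 * X 2 ^ 2) * FF) = 0 := by
  intro β hβ
  have hle := Finsupp.le_def.mp hβ
  have h0 : β 0 ≤ 6 := by simpa [E_apply0] using hle 0
  have h1 : β 1 ≤ 3 := by simpa [E_apply1] using hle 1
  have h2 : β 2 ≤ 3 := by simpa [E_apply2] using hle 2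
  have hexp : (X 0 ^ 4 + 3 * X 1 ^ 2 - 9 * X 1 * X 2 - 3 * X 2 ^ 2) * FF = monomial (E 0 3 5) ((-171) : ℚ) + monomial (E 0 4 4) ((-513) : ℚ) + monomial (E 0 5 3) (171 : ℚ) + monomial (E 2 2 5) ((-81) : ℚ) + monomial (E 2 3 4) ((-297) : ℚ) + monomial (E 2 4 3) ((-81) : ℚ) + monomial (E 2 5 2) (54 : ℚ) + monomial (E 4 1 5) ((-42) : ℚ) + monomial (E 4 2 4) ((-153) : ℚ) + monomial (E 4 4 2) ((-27) : ℚ) + monomial (E 4 5 1) (18 : ℚ) + monomial (E 6 0 5) ((-27) : ℚ) + monomial (E 6 1 4) ((-96) : ℚ) + monomial (E 6 4 1) ((-9) : ℚ) + monomial (E 6 5 0) (6 : ℚ) + monomial (E 8 1 3) (14 : ℚ) + monomial (E 8 2 2) (9 : ℚ) + monomial (E 8 3 1) (6 : ℚ) + monomial (E 10 0 3) (9 : ℚ) + monomial (E 10 1 2) (5 : ℚ) + monomial (E 10 2 1) (3 : ℚ) + monomial (E 10 3 0) (2 : ℚ) := by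
    rw [FF_def]; simp only [monoX, map_ofNat, map_neg, map_one]; ring
  have z0 : coeff β (monomial (E 0 3 5) ((-171) : ℚ) : PN) = 0 := cmb h0 h1 h2 (by omega)
  have z1 : coeff β (monomial (E 0 4 4) ((-513) : ℚ) : PN) = 0 := cmb h0 h1 h2 (by omega)
  have z2 : coeff β (monomial (E 0 5 3) (171 : ℚ) : PN) = 0 := cmb h0 h1 h2 (by omega)
  have z3 : coeff β (monomial (E 2 2 5) ((-81) : ℚ) : PN) = 0 := cmb h0 h1 h2 (by omega)
  have z4 : coeff β (monomial (E 2 3 4) ((-297) : ℚ) : PN) = 0 := cmb h0 h1 h2 (by omega)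
  have z5 : coeff β (monomial (E 2 4 3) ((-81) : ℚ) : PN) = 0 := cmb h0 h1 h2 (by omega)
  have z6 : coeff β (monomial (E 2 5 2) (54 : ℚ) : PN) = 0 := cmb h0 h1 h2 (by omega)
  have z7 : coeff β (monomial (E 4 1 5) ((-42) : ℚ) : PN) = 0 := cmb h0 h1 h2 (by omega)
  have z8 : coeff β (monomial (E 4 2 4) ((-153) : ℚ) : PN) = 0 := cmb h0 h1 h2 (by omega)
  have z9 : coeff β (monomial (E 4 4 2) ((-27) : ℚ) : PN) = 0 := cmb h0 h1 h2 (by omega)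
  have z10 : coeff β (monomial (E 4 5 1) (18 : ℚ) : PN) = 0 := cmb h0 h1 h2 (by omega)
  have z11 : coeff β (monomial (E 6 0 5) ((-27) : ℚ) : PN) = 0 := cmb h0 h1 h2 (by omega)
  have z12 : coeff β (monomial (E 6 1 4) ((-96) : ℚ) : PN) = 0 := cmb h0 h1 h2 (by omega)
  have z13 : coeff β (monomial (E 6 4 1) ((-9) : ℚ) : PN) = 0 := cmb h0 h1 h2 (by omega)
  have z14 : coeff β (monomial (E 6 5 0) (6 : ℚ) : PN) = 0 := cmb h0 h1 h2 (by omega)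
  have z15 : coeff β (monomial (E 8 1 3) (14 : ℚ) : PN) = 0 := cmb h0 h1 h2 (by omega)
  have z16 : coeff β (monomial (E 8 2 2) (9 : ℚ) : PN) = 0 := cmb h0 h1 h2 (by omega)
  have z17 : coeff β (monomial (E 8 3 1) (6 : ℚ) : PN) = 0 := cmb h0 h1 h2 (by omega)
  have z18 : coeff β (monomial (E 10 0 3) (9 : ℚ) : PN) = 0 := cmb h0 h1 h2 (by omega)
  have z19 : coeff β (monomial (E 10 1 2) (5 : ℚ) : PN) = 0 := cmb h0 h1 h2 (by omega)
  have z20 : coeff β (monomial (E 10 2 1) (3 : ℚ) : PN) = 0 := cmb h0 h1 h2 (by omega)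
  have z21 : coeff β (monomial (E 10 3 0) (2 : ℚ) : PN) = 0 := cmb h0 h1 h2 (by omega)
  simp only [hexp, coeff_add, z0, z1, z2, z3, z4, z5, z6, z7, z8, z9, z10, z11, z12, z13, z14, z15, z16, z17, z18, z19, z20, z21, add_zero, zero_add]

lemma hKg4 : ∀ β : Fin 3 →₀ ℕ, β ≤ E 6 3 3 → coeff β ((2 * X 0 * X 1 * X 2 - 3 * X 0 * X 2 ^ 2) * FF) = 0 := by
  intro β hβ
  have hle := Finsupp.le_def.mp hβ
  have h0 : β 0 ≤ 6 := by simpa [E_apply0] using hle 0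
  have h1 : β 1 ≤ 3 := by simpa [E_apply1] using hle 1
  have h2 : β 2 ≤ 3 := by simpa [E_apply2] using hle 2
  have hexp : (2 * X 0 * X 1 * X 2 - 3 * X 0 * X 2 ^ 2) * FF = monomial (E 1 3 5) ((-171) : ℚ) + monomial (E 1 4 4) (114 : ℚ) + monomial (E 3 2 5) ((-81) : ℚ) + monomial (E 3 4 3) (36 : ℚ) + monomial (E 5 1 5) ((-42) : ℚ) + monomial (E 5 2 4) (1 : ℚ) + monomial (E 5 4 2) (12 : ℚ) + monomial (E 7 0 5) ((-27) : ℚ) + monomial (E 7 1 4) (3 : ℚ) + monomial (E 7 2 3) (1 : ℚ) + monomial (E 7 4 1) (4 : ℚ) := by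
    rw [FF_def]; simp only [monoX, map_ofNat, map_neg, map_one]; ring
  have z0 : coeff β (monomial (E 1 3 5) ((-171) : ℚ) : PN) = 0 := cmb h0 h1 h2 (by omega)
  have z1 : coeff β (monomial (E 1 4 4) (114 : ℚ) : PN) = 0 := cmb h0 h1 h2 (by omega)
  have z2 : coeff β (monomial (E 3 2 5) ((-81) : ℚ) : PN) = 0 := cmb h0 h1 h2 (by omega)
  have z3 : coeff β (monomial (E 3 4 3) (36 : ℚ) : PN) = 0 := cmb h0 h1 h2 (by omega)
  have z4 : coeff β (monomial (E 5 1 5) ((-42) : ℚ) : PN) = 0 := cmb h0 h1 h2 (by omega)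
  have z5 : coeff β (monomial (E 5 2 4) (1 : ℚ) : PN) = 0 := cmb h0 h1 h2 (by omega)
  have z6 : coeff β (monomial (E 5 4 2) (12 : ℚ) : PN) = 0 := cmb h0 h1 h2 (by omega)
  have z7 : coeff β (monomial (E 7 0 5) ((-27) : ℚ) : PN) = 0 := cmb h0 h1 h2 (by omega)
  have z8 : coeff β (monomial (E 7 1 4) (3 : ℚ) : PN) = 0 := cmb h0 h1 h2 (by omega)
  have z9 : coeff β (monomial (E 7 2 3) (1 : ℚ) : PN) = 0 := cmb h0 h1 h2 (by omega)
  have z10 : coeff β (monomial (E 7 4 1) (4 : ℚ) : PN) = 0 := cmb h0 h1 h2 (by omega)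
  simp only [hexp, coeff_add, z0, z1, z2, z3, z4, z5, z6, z7, z8, z9, z10, add_zero, zero_add]

lemma hKg5 : ∀ β : Fin 3 →₀ ℕ, β ≤ E 6 3 3 → coeff β ((3 * X 0 * X 1 ^ 2 - 7 * X 0 * X 2 ^ 2) * FF) = 0 := by
  intro β hβ
  have hle := Finsupp.le_def.mp hβ
  have h0 : β 0 ≤ 6 := by simpa [E_apply0] using hle 0
  have h1 : β 1 ≤ 3 := by simpa [E_apply1] using hle 1
  have h2 : β 2 ≤ 3 := by simpa [E_apply2] using hle 2
  have hexp : (3 * X 0 * X 1 ^ 2 - 7 * X 0 * X 2 ^ 2) * FF = monomial (E 1 3 5) ((-399) : ℚ) + monomial (E 1 5 3) (171 : ℚ) + monomial (E 3 2 5) ((-189) : ℚ) + monomial (E 3 3 4) ((-126) : ℚ) + monomial (E 3 4 3) (81 : ℚ) + monomial (E 3 5 2) (54 : ℚ) + monomial (E 5 1 5) ((-98) : ℚ) + monomial (E 5 2 4) ((-63) : ℚ) + monomial (E 5 4 2) (27 : ℚ) + monomial (E 5 5 1) (18 : ℚ) + monomial (E 7 0 5) ((-63) : ℚ) + monomial (E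 7 1 4) ((-35) : ℚ) + monomial (E 7 2 3) (6 : ℚ) + monomial (E 7 3 2) (1 : ℚ) + monomial (E 7 4 1) (9 : ℚ) + monomial (E 7 5 0) (6 : ℚ) := by
    rw [FF_def]; simp only [monoX, map_ofNat, map_neg, map_one]; ring
  have z0 : coeff β (monomial (E 1 3 5) ((-399) : ℚ) : PN) = 0 := cmb h0 h1 h2 (by omega)
  have z1 : coeff β (monomial (E 1 5 3) (171 : ℚ) : PN) = 0 := cmb h0 h1 h2 (by omega)
  have z2 : coeff β (monomial (E 3 2 5) ((-189) : ℚ) : PN) = 0 := cmb h0 h1 h2 (by omega)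
  have z3 : coeff β (monomial (E 3 3 4) ((-126) : ℚ) : PN) = 0 := cmb h0 h1 h2 (by omega)
  have z4 : coeff β (monomial (E 3 4 3) (81 : ℚ) : PN) = 0 := cmb h0 h1 h2 (by omega)
  have z5 : coeff β (monomial (E 3 5 2) (54 : ℚ) : PN) = 0 := cmb h0 h1 h2 (by omega)
  have z6 : coeff β (monomial (E 5 1 5) ((-98) : ℚ) : PN) = 0 := cmb h0 h1 h2 (by omega)
  have z7 : coeff β (monomial (E 5 2 4) ((-63) : ℚ) : PN) = 0 := cmb h0 h1 h2 (by omega)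
  have z8 : coeff β (monomial (E 5 4 2) (27 : ℚ) : PN) = 0 := cmb h0 h1 h2 (by omega)
  have z9 : coeff β (monomial (E 5 5 1) (18 : ℚ) : PN) = 0 := cmb h0 h1 h2 (by omega)
  have z10 : coeff β (monomial (E 7 0 5) ((-63) : ℚ) : PN) = 0 := cmb h0 h1 h2 (by omega)
  have z11 : coeff β (monomial (E 7 1 4) ((-35) : ℚ) : PN) = 0 := cmb h0 h1 h2 (by omega)
  have z12 : coeff β (monomial (E 7 2 3) (6 : ℚ) : PN) = 0 := cmb h0 h1 h2 (by omega)
  have z13 : coeff β (monomial (E 7 3 2) (1 : ℚ) : PN) = 0 := cmb h0 h1 h2 (by omega)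
  have z14 : coeff β (monomial (E 7 4 1) (9 : ℚ) : PN) = 0 := cmb h0 h1 h2 (by omega)
  have z15 : coeff β (monomial (E 7 5 0) (6 : ℚ) : PN) = 0 := cmb h0 h1 h2 (by omega)
  simp only [hexp, coeff_add, z0, z1, z2, z3, z4, z5, z6, z7, z8, z9, z10, z11, z12, z13, z14, z15, add_zero, zero_add]

def K : Ideal PN where
  carrier := {p | ∀ β : Fin 3 →₀ ℕ, β ≤ E 6 3 3 → coeff β (p * FF) = 0}
  zero_mem' := by intro β hβ; simp
  add_mem' := by
    intro a b ha hb β hβ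
    rw [add_mul, coeff_add, ha β hβ, hb β hβ, add_zero]
  smul_mem' := by
    intro c x hx β hβ
    rw [smul_eq_mul, mul_assoc, coeff_mul]
    apply Finset.sum_eq_zero
    rintro ⟨u, v⟩ huv
    have huv' : u + v = β := Finset.HasAntidiagonal.mem_antidiagonal.mp huv
    have hv : v ≤ β := huv' ▸ le_add_self
    rw [hx v (le_trans hv hβ), mul_zero]

lemma hJK : J ≤ K := by
  rw [J, Ideal.span_le]
  intro p hp
  simp only [Set.mem_insert_iff, Set.mem_singleton_iff] at hp
  rcases hp with rfl | rfl | rfl | rfl | rfl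
  · exact hKg1
  · exact hKg2
  · exact hKg3
  · exact hKg4
  · exact hKg5

lemma K_spec {p : PN} (hp : p ∈ K) (f : PN) : coeff (E 6 3 3) (p * f * FF) = 0 := by
  have h2 : p * f ∈ K := Ideal.mul_mem_right f K hp
  exact h2 (E 6 3 3) le_rfl

lemma memJ_0_0_4 : (monomial (E 0 0 4) (1:ℚ) : PN) ∈ J :=
  mem_J_scaled (L := 3) (by norm_num) (mem_J
    (q1 := 12 * X 2 ^ 2 + 9 * X 1 ^ 1 * X 2 ^ 1 + (-6) * X 1 ^ 2 + 4 * X 0 ^ 2 * X 2 ^ 1) (q2 := (-9) * X 2 ^ 2 + 6 * X 1 ^ 1 * X 2 ^ 1) (q3 := (-4) * X 2 ^ 2)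
    (q4 := (0 : PN)) (q5 := (0 : PN))
    (by simp only [monoX1, map_ofNat, map_one]; ring))

lemma memJ_0_1_3 : (monomial (E 0 1 3) (1:ℚ) : PN) ∈ J :=
  mem_J_scaled (L := 1) (by norm_num) (mem_J
    (q1 := 6 * X 2 ^ 2 + 4 * X 1 ^ 1 * X 2 ^ 1 + (-3) * X 1 ^ 2 + 2 * X 0 ^ 2 * X 2 ^ 1) (q2 := (-4) * X 2 ^ 2 + 3 * X 1 ^ 1 * X 2 ^ 1) (q3 := (-2) * X 2 ^ 2)
    (q4 := (0 : PN)) (q5 := (0 : PN))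
    (by simp only [monoX1, map_ofNat, map_one]; ring))

lemma memJ_0_2_2 : (monomial (E 0 2 2) (1:ℚ) : PN) ∈ J :=
  mem_J_scaled (L := 1) (by norm_num) (mem_J
    (q1 := 9 * X 2 ^ 2 + 6 * X 1 ^ 1 * X 2 ^ 1 + (-5) * X 1 ^ 2 + 3 * X 0 ^ 2 * X 2 ^ 1) (q2 := (-6) * X 2 ^ 2 + 5 * X 1 ^ 1 * X 2 ^ 1) (q3 := (-3) * X 2 ^ 2)
    (q4 := (0 : PN)) (q5 := (0 : PN))
    (by simp only [monoX1, map_ofNat, map_one]; ring))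

lemma memJ_0_3_1 : (monomial (E 0 3 1) (1:ℚ) : PN) ∈ J :=
  mem_J_scaled (L := 3) (by norm_num) (mem_J
    (q1 := 45 * X 2 ^ 2 + 27 * X 1 ^ 1 * X 2 ^ 1 + (-27) * X 1 ^ 2 + 15 * X 0 ^ 2 * X 2 ^ 1 + (-1) * X 0 ^ 2 * X 1 ^ 1) (q2 := (-30) * X 2 ^ 2 + 27 * X 1 ^ 1 * X 2 ^ 1) (q3 := (-15) * X 2 ^ 2 + X 1 ^ 1 * X 2 ^ 1)
    (q4 := (0 : PN)) (q5 := (0 : PN))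
    (by simp only [monoX1, map_ofNat, map_one]; ring))

lemma memJ_0_4_0 : (monomial (E 0 4 0) (1:ℚ) : PN) ∈ J :=
  mem_J_scaled (L := 3) (by norm_num) (mem_J
    (q1 := 81 * X 2 ^ 2 + 42 * X 1 ^ 1 * X 2 ^ 1 + (-55) * X 1 ^ 2 + 27 * X 0 ^ 2 * X 2 ^ 1 + (-3) * X 0 ^ 2 * X 1 ^ 1) (q2 := (-54) * X 2 ^ 2 + 54 * X 1 ^ 1 * X 2 ^ 1 + (-1) * X 0 ^ 2 * X 1 ^ 1) (q3 := (-27) * X 2 ^ 2 + 3 * X 1 ^ 1 * X 2 ^ 1 + X 1 ^ 2)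
    (q4 := (0 : PN)) (q5 := (0 : PN))
    (by simp only [monoX1, map_ofNat, map_one]; ring))

lemma memJ_1_0_3 : (monomial (E 1 0 3) (1:ℚ) : PN) ∈ J :=
  mem_J_scaled (L := 3) (by norm_num) (mem_J
    (q1 := 12 * X 0 ^ 1 * X 2 ^ 1 + 9 * X 0 ^ 1 * X 1 ^ 1 + 4 * X 0 ^ 3) (q2 := (-9) * X 0 ^ 1 * X 2 ^ 1) (q3 := (-4) * X 0 ^ 1 * X 2 ^ 1)
    (q4 := 6 * X 1 ^ 1) (q5 := (0 : PN))
    (by simp only [monoX1, map_ofNat, map_one]; ring))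

lemma memJ_1_1_2 : (monomial (E 1 1 2) (1:ℚ) : PN) ∈ J :=
  mem_J_scaled (L := 1) (by norm_num) (mem_J
    (q1 := 6 * X 0 ^ 1 * X 2 ^ 1 + 4 * X 0 ^ 1 * X 1 ^ 1 + 2 * X 0 ^ 3) (q2 := (-4) * X 0 ^ 1 * X 2 ^ 1) (q3 := (-2) * X 0 ^ 1 * X 2 ^ 1)
    (q4 := 3 * X 1 ^ 1) (q5 := (0 : PN))
    (by simp only [monoX1, map_ofNat, map_one]; ring))

lemma memJ_1_2_1 : (monomial (E 1 2 1) (1:ℚ) : PN) ∈ J :=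
  mem_J_scaled (L := 1) (by norm_num) (mem_J
    (q1 := 9 * X 0 ^ 1 * X 2 ^ 1 + 6 * X 0 ^ 1 * X 1 ^ 1 + 3 * X 0 ^ 3) (q2 := (-6) * X 0 ^ 1 * X 2 ^ 1) (q3 := (-3) * X 0 ^ 1 * X 2 ^ 1)
    (q4 := 5 * X 1 ^ 1) (q5 := (0 : PN))
    (by simp only [monoX1, map_ofNat, map_one]; ring))

lemma memJ_1_3_0 : (monomial (E 1 3 0) (1:ℚ) : PN) ∈ J :=
  mem_J_scaled (L := 3) (by norm_num) (mem_J
    (q1 := 42 * X 0 ^ 1 * X 2 ^ 1 + 26 * X 0 ^ 1 * X 1 ^ 1 + 15 * X 0 ^ 3) (q2 := (-27) * X 0 ^ 1 * X 2 ^ 1 + (-1) * X 0 ^ 3) (q3 := (-15) * X 0 ^ 1 * X 2 ^ 1 + X 0 ^ 1 * X 1 ^ 1)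
    (q4 := 27 * X 1 ^ 1) (q5 := (0 : PN))
    (by simp only [monoX1, map_ofNat, map_one]; ring))

lemma memJ_3_0_2 : (monomial (E 3 0 2) (1:ℚ) : PN) ∈ J :=
  mem_J_scaled (L := 1) (by norm_num) (mem_J
    (q1 := 13 * X 0 ^ 1 * X 2 ^ 1 + 9 * X 0 ^ 1 * X 1 ^ 1 + 4 * X 0 ^ 3) (q2 := (-9) * X 0 ^ 1 * X 2 ^ 1) (q3 := (-4) * X 0 ^ 1 * X 2 ^ 1)
    (q4 := 6 * X 1 ^ 1) (q5 := (0 : PN))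
    (by simp only [monoX1, map_ofNat, map_one]; ring))

lemma memJ_3_1_1 : (monomial (E 3 1 1) (1:ℚ) : PN) ∈ J :=
  mem_J_scaled (L := 1) (by norm_num) (mem_J
    (q1 := 18 * X 0 ^ 1 * X 2 ^ 1 + 13 * X 0 ^ 1 * X 1 ^ 1 + 6 * X 0 ^ 3) (q2 := (-12) * X 0 ^ 1 * X 2 ^ 1) (q3 := (-6) * X 0 ^ 1 * X 2 ^ 1)
    (q4 := 9 * X 1 ^ 1) (q5 := (0 : PN))
    (by simp only [monoX1, map_ofNat, map_one]; ring))

lemma memJ_3_2_0 : (monomial (E 3 2 0) (1:ℚ) : PN) ∈ J :=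
  mem_J_scaled (L := 1) (by norm_num) (mem_J
    (q1 := 27 * X 0 ^ 1 * X 2 ^ 1 + 18 * X 0 ^ 1 * X 1 ^ 1 + 9 * X 0 ^ 3) (q2 := (-18) * X 0 ^ 1 * X 2 ^ 1 + X 0 ^ 1 * X 1 ^ 1) (q3 := (-9) * X 0 ^ 1 * X 2 ^ 1)
    (q4 := 14 * X 1 ^ 1) (q5 := (0 : PN))
    (by simp only [monoX1, map_ofNat, map_one]; ring))

lemma memJ_5_0_1 : (monomial (E 5 0 1) (1:ℚ) : PN) ∈ J :=
  mem_J_scaled (L := 1) (by norm_num) (mem_J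
    (q1 := 39 * X 0 ^ 1 * X 2 ^ 1 + 27 * X 0 ^ 1 * X 1 ^ 1 + 13 * X 0 ^ 3) (q2 := (-27) * X 0 ^ 1 * X 2 ^ 1) (q3 := (-12) * X 0 ^ 1 * X 2 ^ 1)
    (q4 := 18 * X 1 ^ 1) (q5 := (0 : PN))
    (by simp only [monoX1, map_ofNat, map_one]; ring))

lemma memJ_5_1_0 : (monomial (E 5 1 0) (1:ℚ) : PN) ∈ J :=
  mem_J_scaled (L := 1) (by norm_num) (mem_J
    (q1 := 57 * X 0 ^ 1 * X 2 ^ 1 + 40 * X 0 ^ 1 * X 1 ^ 1 + 18 * X 0 ^ 3) (q2 := (-39) * X 0 ^ 1 * X 2 ^ 1 + X 0 ^ 3) (q3 := (-18) * X 0 ^ 1 * X 2 ^ 1)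
    (q4 := 27 * X 1 ^ 1) (q5 := (0 : PN))
    (by simp only [monoX1, map_ofNat, map_one]; ring))

lemma memJ_7_0_0 : (monomial (E 7 0 0) (1:ℚ) : PN) ∈ J :=
  mem_J_scaled (L := 1) (by norm_num) (mem_J
    (q1 := 120 * X 0 ^ 1 * X 2 ^ 1 + 90 * X 0 ^ 1 * X 1 ^ 1 + 39 * X 0 ^ 3) (q2 := (-81) * X 0 ^ 1 * X 2 ^ 1 + (-3) * X 0 ^ 1 * X 1 ^ 1) (q3 := (-39) * X 0 ^ 1 * X 2 ^ 1 + X 0 ^ 3)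
    (q4 := 57 * X 1 ^ 1) (q5 := (0 : PN))
    (by simp only [monoX1, map_ofNat, map_one]; ring))

lemma keymem : ∀ (n : ℕ) (d : Fin 3 →₀ ℕ), d 0 + d 1 + d 2 ≤ n →
    7 ≤ d 0 + 2 * d 1 + 2 * d 2 → (monomial d 1 : PN) ∈ J := by
  intro n
  induction n with
  | zero => intro d h h7; exact absurd h7 (by omega)
  | succ n ih =>
    intro d hn h7
    obtain ⟨a, b, c, rfl⟩ : ∃ a b c, d = E a b c := ⟨d 0, d 1, d 2, fin3ext d⟩
    simp only [E_apply0, E_apply1, E_apply2] at hn h7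
    by_cases hbase : a + 2 * b + 2 * c = 7 ∨ (a = 0 ∧ b + c = 4)
    · clear ih hn
      rcases hbase with h7' | ⟨rfl, h8⟩
      · have hb : b = 0 ∨ b = 1 ∨ b = 2 ∨ b = 3 := by omega
        rcases hb with rfl | rfl | rfl | rfl
        · have hc : c = 0 ∨ c = 1 ∨ c = 2 ∨ c = 3 := by omega
          rcases hc with rfl | rfl | rfl | rfl
          · obtain rfl : a = 7 := by omega
            exact memJ_7_0_0
          · obtain rfl : a = 5 := by omega
            exact memJ_5_0_1
          · obtain rfl : a = 3 := by omega
            exact memJ_3_0_2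
          · obtain rfl : a = 1 := by omega
            exact memJ_1_0_3
        · have hc : c = 0 ∨ c = 1 ∨ c = 2 := by omega
          rcases hc with rfl | rfl | rfl
          · obtain rfl : a = 5 := by omega
            exact memJ_5_1_0
          · obtain rfl : a = 3 := by omega
            exact memJ_3_1_1
          · obtain rfl : a = 1 := by omega
            exact memJ_1_1_2
        · have hc : c = 0 ∨ c = 1 := by omega
          rcases hc with rfl | rfl
          · obtain rfl : a = 3 := by omega
            exact memJ_3_2_0
          · obtain rfl : a = 1 := by omega
            exact memJ_1_2_1
        · have hc : c = 0 := by omega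
          rcases hc with rfl
          · obtain rfl : a = 1 := by omega
            exact memJ_1_3_0
      · have hb : b = 0 ∨ b = 1 ∨ b = 2 ∨ b = 3 ∨ b = 4 := by omega
        rcases hb with rfl | rfl | rfl | rfl | rfl
        · obtain rfl : c = 4 := by omega
          exact memJ_0_0_4
        · obtain rfl : c = 3 := by omega
          exact memJ_0_1_3
        · obtain rfl : c = 2 := by omega
          exact memJ_0_2_2
        · obtain rfl : c = 1 := by omega
          exact memJ_0_3_1
        · obtain rfl : c = 0 := by omega
          exact memJ_0_4_0
    · push_neg at hbase
      have hcase : 1 ≤ a ∨ (a = 0 ∧ 1 ≤ b) ∨ (a = 0 ∧ b = 0 ∧ 1 ≤ c) := by omega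
      rcases hcase with ha | ⟨rfl, hb⟩ | ⟨rfl, rfl, hc⟩
      · obtain ⟨a', rfl⟩ : ∃ a', a = a' + 1 := ⟨a - 1, by omega⟩
        rw [← X0_mul_mono]
        exact Ideal.mul_mem_left _ _ (ih (E a' b c)
          (by simp only [E_apply0, E_apply1, E_apply2]; omega)
          (by simp only [E_apply0, E_apply1, E_apply2]; omega))
      · obtain ⟨b', rfl⟩ : ∃ b', b = b' + 1 := ⟨b - 1, by omega⟩
        rw [← X1_mul_mono]
        exact Ideal.mul_mem_left _ _ (ih (E 0 b' c)
          (by simp only [E_apply0, E_apply1, E_apply2]; omega)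
          (by simp only [E_apply0, E_apply1, E_apply2]; omega))
      · obtain ⟨c', rfl⟩ : ∃ c', c = c' + 1 := ⟨c - 1, by omega⟩
        rw [← X2_mul_mono]
        exact Ideal.mul_mem_left _ _ (ih (E 0 0 c')
          (by simp only [E_apply0, E_apply1, E_apply2]; omega)
          (by simp only [E_apply0, E_apply1, E_apply2]; omega))

lemma red3 {L c1 c2 c3 : ℚ} (hL : L ≠ 0) {p p1 p2 p3 : PN}
    (h : C L * p - (C c1 * p1 + C c2 * p2 + C c3 * p3) ∈ J) :
    (Ideal.Quotient.mkₐ ℚ J) p = (L⁻¹ * c1) • (Ideal.Quotient.mkₐ ℚ J) p1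
      + (L⁻¹ * c2) • (Ideal.Quotient.mkₐ ℚ J) p2
      + (L⁻¹ * c3) • (Ideal.Quotient.mkₐ ℚ J) p3 := by
  have h3 : (Ideal.Quotient.mkₐ ℚ J) (C L * p)
      = (Ideal.Quotient.mkₐ ℚ J) (C c1 * p1 + C c2 * p2 + C c3 * p3) := by
    simp only [Ideal.Quotient.mkₐ_eq_mk]
    exact Ideal.Quotient.eq.mpr h
  rw [C_mul', C_mul', C_mul', C_mul', map_add, map_add, map_smul, map_smul, map_smul,
    map_smul] at h3
  have h4 := congrArg (fun z => L⁻¹ • z) h3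
  simpa [smul_smul, smul_add, inv_mul_cancel₀ hL] using h4

lemma red1 {L c1 : ℚ} (hL : L ≠ 0) {p p1 : PN}
    (h : C L * p - C c1 * p1 ∈ J) :
    (Ideal.Quotient.mkₐ ℚ J) p = (L⁻¹ * c1) • (Ideal.Quotient.mkₐ ℚ J) p1 := by
  have h3 : (Ideal.Quotient.mkₐ ℚ J) (C L * p) = (Ideal.Quotient.mkₐ ℚ J) (C c1 * p1) := by
    simp only [Ideal.Quotient.mkₐ_eq_mk]
    exact Ideal.Quotient.eq.mpr h
  rw [C_mul', C_mul', map_smul, map_smul] at h3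
  have h4 := congrArg (fun z => L⁻¹ • z) h3
  simpa [smul_smul, inv_mul_cancel₀ hL] using h4

-- pairing test: e=(0,1,0) f=(0,2,0) : value 2*λ(0,3,0)=9
example : coeff (E 6 3 3) (monomial (E 0 1 0) (1:ℚ) * monomial (E 0 2 0) 1 * FF) = 9 := by
  simp only [monomial_mul, FF_def, mul_add, E_add, one_mul, mul_one, coeff_add, coeff_monomial,
    E_eq_iff]
  norm_num

-- component_le
lemma component_le {i : ℕ} {S : Submodule ℚ (PN ⧸ J)}
    (h : ∀ d : Fin 3 →₀ ℕ, Finsupp.weight w d = i → (Ideal.Quotient.mkₐ ℚ J) (monomial d 1) ∈ S) :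
    component i ≤ S := by
  rintro x hx
  obtain ⟨p, hp, rfl⟩ := Submodule.mem_map.mp hx
  rw [AlgHom.toLinearMap_apply]
  nth_rewrite 1 [p.as_sum]
  rw [map_sum]
  apply Submodule.sum_mem
  intro d hd
  have hw : Finsupp.weight w d = i :=
    (mem_weightedHomogeneousSubmodule _ _ _ _).mp hp (mem_support_iff.mp hd)
  have hm : monomial d (coeff d p) = (coeff d p) • monomial d (1:ℚ) := by
    rw [smul_monomial, smul_eq_mul, mul_one]
  rw [hm, map_smul]
  exact S.smul_mem _ (h d hw)

lemma weight_eval (d : Fin 3 →₀ ℕ) : Finsupp.weight w d = d 0 + 2 * d 1 + 2 * d 2 := by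
  conv_lhs => rw [fin3ext d]
  rw [weight_E]

def vv (a b c : ℕ) : PN ⧸ J := (Ideal.Quotient.mkₐ ℚ J) (monomial (E a b c) 1)

lemma vv_mem (a b c i : ℕ) (h : a + 2*b + 2*c = i) : vv a b c ∈ component i :=
  ⟨monomial (E a b c) 1,
    (mem_weightedHomogeneousSubmodule _ _ _ _).mpr
      (isWeightedHomogeneous_monomial _ _ _ (by rw [weight_E, h])),
    rfl⟩

lemma component_eq_bot {i : ℕ} (hi : 6 < i) : component i = ⊥ := by
  rw [eq_bot_iff]
  apply component_le
  intro d hw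
  rw [weight_eval] at hw
  have hm : monomial d (1:ℚ) ∈ J := keymem (d 0 + d 1 + d 2) d le_rfl (by omega)
  simp only [Submodule.mem_bot, Ideal.Quotient.mkₐ_eq_mk]
  exact Ideal.Quotient.eq_zero_iff_mem.mpr hm

def fam0 : Fin 1 → PN ⧸ J := ![vv 0 0 0]

lemma fam0_0 : fam0 0 = vv 0 0 0 := rfl

def fam1 : Fin 1 → PN ⧸ J := ![vv 1 0 0]

lemma fam1_0 : fam1 0 = vv 1 0 0 := rfl

def fam2 : Fin 3 → PN ⧸ J := ![vv 2 0 0, vv 0 1 0, vv 0 0 1]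

lemma fam2_0 : fam2 0 = vv 2 0 0 := rfl

lemma fam2_1 : fam2 1 = vv 0 1 0 := rfl

lemma fam2_2 : fam2 2 = vv 0 0 1 := rfl

def fam3 : Fin 3 → PN ⧸ J := ![vv 3 0 0, vv 1 1 0, vv 1 0 1]

lemma fam3_0 : fam3 0 = vv 3 0 0 := rfl

lemma fam3_1 : fam3 1 = vv 1 1 0 := rfl

lemma fam3_2 : fam3 2 = vv 1 0 1 := rfl

def fam4 : Fin 3 → PN ⧸ J := ![vv 0 0 2, vv 0 1 1, vv 0 2 0]

lemma fam4_0 : fam4 0 = vv 0 0 2 := rfl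

lemma fam4_1 : fam4 1 = vv 0 1 1 := rfl

lemma fam4_2 : fam4 2 = vv 0 2 0 := rfl

def fam5 : Fin 1 → PN ⧸ J := ![vv 1 0 2]

lemma fam5_0 : fam5 0 = vv 1 0 2 := rfl

def fam6 : Fin 1 → PN ⧸ J := ![vv 0 0 3]

lemma fam6_0 : fam6 0 = vv 0 0 3 := rfl

lemma pair0_0_0 :
    coeff (E 6 3 3) (monomial (E 0 0 0) (1:ℚ) * monomial (E 0 0 3) 1 * FF) = (2 : ℚ) := by
  simp only [monomial_mul, FF_def, mul_add, E_add, one_mul, mul_one, coeff_add, coeff_monomial,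
    E_eq_iff]
  norm_num

lemma pair1_0_0 :
    coeff (E 6 3 3) (monomial (E 1 0 0) (1:ℚ) * monomial (E 1 0 2) 1 * FF) = (6 : ℚ) := by
  simp only [monomial_mul, FF_def, mul_add, E_add, one_mul, mul_one, coeff_add, coeff_monomial,
    E_eq_iff]
  norm_num

lemma pair2_0_0 :
    coeff (E 6 3 3) (monomial (E 2 0 0) (1:ℚ) * monomial (E 0 0 2) 1 * FF) = (6 : ℚ) := by
  simp only [monomial_mul, FF_def, mul_add, E_add, one_mul, mul_one, coeff_add, coeff_monomial,
    E_eq_iff]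
  norm_num

lemma pair2_0_1 :
    coeff (E 6 3 3) (monomial (E 2 0 0) (1:ℚ) * monomial (E 0 1 1) 1 * FF) = (9 : ℚ) := by
  simp only [monomial_mul, FF_def, mul_add, E_add, one_mul, mul_one, coeff_add, coeff_monomial,
    E_eq_iff]
  norm_num

lemma pair2_0_2 :
    coeff (E 6 3 3) (monomial (E 2 0 0) (1:ℚ) * monomial (E 0 2 0) 1 * FF) = (14 : ℚ) := by
  simp only [monomial_mul, FF_def, mul_add, E_add, one_mul, mul_one, coeff_add, coeff_monomial,
    E_eq_iff]
  norm_num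

lemma pair2_1_0 :
    coeff (E 6 3 3) (monomial (E 0 1 0) (1:ℚ) * monomial (E 0 0 2) 1 * FF) = (3 : ℚ) := by
  simp only [monomial_mul, FF_def, mul_add, E_add, one_mul, mul_one, coeff_add, coeff_monomial,
    E_eq_iff]
  norm_num

lemma pair2_1_1 :
    coeff (E 6 3 3) (monomial (E 0 1 0) (1:ℚ) * monomial (E 0 1 1) 1 * FF) = (5 : ℚ) := by
  simp only [monomial_mul, FF_def, mul_add, E_add, one_mul, mul_one, coeff_add, coeff_monomial,
    E_eq_iff]
  norm_num

lemma pair2_1_2 :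
    coeff (E 6 3 3) (monomial (E 0 1 0) (1:ℚ) * monomial (E 0 2 0) 1 * FF) = (9 : ℚ) := by
  simp only [monomial_mul, FF_def, mul_add, E_add, one_mul, mul_one, coeff_add, coeff_monomial,
    E_eq_iff]
  norm_num

lemma pair2_2_0 :
    coeff (E 6 3 3) (monomial (E 0 0 1) (1:ℚ) * monomial (E 0 0 2) 1 * FF) = (2 : ℚ) := by
  simp only [monomial_mul, FF_def, mul_add, E_add, one_mul, mul_one, coeff_add, coeff_monomial,
    E_eq_iff]
  norm_num

lemma pair2_2_1 :
    coeff (E 6 3 3) (monomial (E 0 0 1) (1:ℚ) * monomial (E 0 1 1) 1 * FF) = (3 : ℚ) := by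
  simp only [monomial_mul, FF_def, mul_add, E_add, one_mul, mul_one, coeff_add, coeff_monomial,
    E_eq_iff]
  norm_num

lemma pair2_2_2 :
    coeff (E 6 3 3) (monomial (E 0 0 1) (1:ℚ) * monomial (E 0 2 0) 1 * FF) = (5 : ℚ) := by
  simp only [monomial_mul, FF_def, mul_add, E_add, one_mul, mul_one, coeff_add, coeff_monomial,
    E_eq_iff]
  norm_num

lemma pair3_0_0 :
    coeff (E 6 3 3) (monomial (E 3 0 0) (1:ℚ) * monomial (E 3 0 0) 1 * FF) = (57 : ℚ) := by
  simp only [monomial_mul, FF_def, mul_add, E_add, one_mul, mul_one, coeff_add, coeff_monomial,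
    E_eq_iff]
  norm_num

lemma pair3_0_1 :
    coeff (E 6 3 3) (monomial (E 3 0 0) (1:ℚ) * monomial (E 1 1 0) 1 * FF) = (27 : ℚ) := by
  simp only [monomial_mul, FF_def, mul_add, E_add, one_mul, mul_one, coeff_add, coeff_monomial,
    E_eq_iff]
  norm_num

lemma pair3_0_2 :
    coeff (E 6 3 3) (monomial (E 3 0 0) (1:ℚ) * monomial (E 1 0 1) 1 * FF) = (18 : ℚ) := by
  simp only [monomial_mul, FF_def, mul_add, E_add, one_mul, mul_one, coeff_add, coeff_monomial,
    E_eq_iff]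
  norm_num

lemma pair3_1_0 :
    coeff (E 6 3 3) (monomial (E 1 1 0) (1:ℚ) * monomial (E 3 0 0) 1 * FF) = (27 : ℚ) := by
  simp only [monomial_mul, FF_def, mul_add, E_add, one_mul, mul_one, coeff_add, coeff_monomial,
    E_eq_iff]
  norm_num

lemma pair3_1_1 :
    coeff (E 6 3 3) (monomial (E 1 1 0) (1:ℚ) * monomial (E 1 1 0) 1 * FF) = (14 : ℚ) := by
  simp only [monomial_mul, FF_def, mul_add, E_add, one_mul, mul_one, coeff_add, coeff_monomial,
    E_eq_iff]
  norm_num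

lemma pair3_1_2 :
    coeff (E 6 3 3) (monomial (E 1 1 0) (1:ℚ) * monomial (E 1 0 1) 1 * FF) = (9 : ℚ) := by
  simp only [monomial_mul, FF_def, mul_add, E_add, one_mul, mul_one, coeff_add, coeff_monomial,
    E_eq_iff]
  norm_num

lemma pair3_2_0 :
    coeff (E 6 3 3) (monomial (E 1 0 1) (1:ℚ) * monomial (E 3 0 0) 1 * FF) = (18 : ℚ) := by
  simp only [monomial_mul, FF_def, mul_add, E_add, one_mul, mul_one, coeff_add, coeff_monomial,
    E_eq_iff]
  norm_num

lemma pair3_2_1 :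
    coeff (E 6 3 3) (monomial (E 1 0 1) (1:ℚ) * monomial (E 1 1 0) 1 * FF) = (9 : ℚ) := by
  simp only [monomial_mul, FF_def, mul_add, E_add, one_mul, mul_one, coeff_add, coeff_monomial,
    E_eq_iff]
  norm_num

lemma pair3_2_2 :
    coeff (E 6 3 3) (monomial (E 1 0 1) (1:ℚ) * monomial (E 1 0 1) 1 * FF) = (6 : ℚ) := by
  simp only [monomial_mul, FF_def, mul_add, E_add, one_mul, mul_one, coeff_add, coeff_monomial,
    E_eq_iff]
  norm_num

lemma pair4_0_0 :
    coeff (E 6 3 3) (monomial (E 0 0 2) (1:ℚ) * monomial (E 2 0 0) 1 * FF) = (6 : ℚ) := by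
  simp only [monomial_mul, FF_def, mul_add, E_add, one_mul, mul_one, coeff_add, coeff_monomial,
    E_eq_iff]
  norm_num

lemma pair4_0_1 :
    coeff (E 6 3 3) (monomial (E 0 0 2) (1:ℚ) * monomial (E 0 1 0) 1 * FF) = (3 : ℚ) := by
  simp only [monomial_mul, FF_def, mul_add, E_add, one_mul, mul_one, coeff_add, coeff_monomial,
    E_eq_iff]
  norm_num

lemma pair4_0_2 :
    coeff (E 6 3 3) (monomial (E 0 0 2) (1:ℚ) * monomial (E 0 0 1) 1 * FF) = (2 : ℚ) := by
  simp only [monomial_mul, FF_def, mul_add, E_add, one_mul, mul_one, coeff_add, coeff_monomial,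
    E_eq_iff]
  norm_num

lemma pair4_1_0 :
    coeff (E 6 3 3) (monomial (E 0 1 1) (1:ℚ) * monomial (E 2 0 0) 1 * FF) = (9 : ℚ) := by
  simp only [monomial_mul, FF_def, mul_add, E_add, one_mul, mul_one, coeff_add, coeff_monomial,
    E_eq_iff]
  norm_num

lemma pair4_1_1 :
    coeff (E 6 3 3) (monomial (E 0 1 1) (1:ℚ) * monomial (E 0 1 0) 1 * FF) = (5 : ℚ) := by
  simp only [monomial_mul, FF_def, mul_add, E_add, one_mul, mul_one, coeff_add, coeff_monomial,
    E_eq_iff]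
  norm_num

lemma pair4_1_2 :
    coeff (E 6 3 3) (monomial (E 0 1 1) (1:ℚ) * monomial (E 0 0 1) 1 * FF) = (3 : ℚ) := by
  simp only [monomial_mul, FF_def, mul_add, E_add, one_mul, mul_one, coeff_add, coeff_monomial,
    E_eq_iff]
  norm_num

lemma pair4_2_0 :
    coeff (E 6 3 3) (monomial (E 0 2 0) (1:ℚ) * monomial (E 2 0 0) 1 * FF) = (14 : ℚ) := by
  simp only [monomial_mul, FF_def, mul_add, E_add, one_mul, mul_one, coeff_add, coeff_monomial,
    E_eq_iff]
  norm_num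

lemma pair4_2_1 :
    coeff (E 6 3 3) (monomial (E 0 2 0) (1:ℚ) * monomial (E 0 1 0) 1 * FF) = (9 : ℚ) := by
  simp only [monomial_mul, FF_def, mul_add, E_add, one_mul, mul_one, coeff_add, coeff_monomial,
    E_eq_iff]
  norm_num

lemma pair4_2_2 :
    coeff (E 6 3 3) (monomial (E 0 2 0) (1:ℚ) * monomial (E 0 0 1) 1 * FF) = (5 : ℚ) := by
  simp only [monomial_mul, FF_def, mul_add, E_add, one_mul, mul_one, coeff_add, coeff_monomial,
    E_eq_iff]
  norm_num

lemma pair5_0_0 :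
    coeff (E 6 3 3) (monomial (E 1 0 2) (1:ℚ) * monomial (E 1 0 0) 1 * FF) = (6 : ℚ) := by
  simp only [monomial_mul, FF_def, mul_add, E_add, one_mul, mul_one, coeff_add, coeff_monomial,
    E_eq_iff]
  norm_num

lemma pair6_0_0 :
    coeff (E 6 3 3) (monomial (E 0 0 3) (1:ℚ) * monomial (E 0 0 0) 1 * FF) = (2 : ℚ) := by
  simp only [monomial_mul, FF_def, mul_add, E_add, one_mul, mul_one, coeff_add, coeff_monomial,
    E_eq_iff]
  norm_num

lemma span_comp0 : component 0 = Submodule.span ℚ (Set.range fam0) := by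
  apply le_antisymm
  · apply component_le
    intro d hw
    rw [weight_eval] at hw
    obtain ⟨a, b, c, rfl⟩ : ∃ a b c, d = E a b c := ⟨d 0, d 1, d 2, fin3ext d⟩
    simp only [E_apply0, E_apply1, E_apply2] at hw
    obtain ⟨rfl, rfl, rfl⟩ : a = 0 ∧ b = 0 ∧ c = 0 := by omega
    exact Submodule.subset_span ⟨0, rfl⟩
  · rw [Submodule.span_le]
    rintro x ⟨j, rfl⟩
    fin_cases j
    · exact vv_mem 0 0 0 0 (by norm_num)

lemma span_comp1 : component 1 = Submodule.span ℚ (Set.range fam1) := by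
  apply le_antisymm
  · apply component_le
    intro d hw
    rw [weight_eval] at hw
    obtain ⟨a, b, c, rfl⟩ : ∃ a b c, d = E a b c := ⟨d 0, d 1, d 2, fin3ext d⟩
    simp only [E_apply0, E_apply1, E_apply2] at hw
    obtain ⟨rfl, rfl, rfl⟩ : a = 1 ∧ b = 0 ∧ c = 0 := by omega
    exact Submodule.subset_span ⟨0, rfl⟩
  · rw [Submodule.span_le]
    rintro x ⟨j, rfl⟩
    fin_cases j
    · exact vv_mem 1 0 0 1 (by norm_num)

lemma span_comp2 : component 2 = Submodule.span ℚ (Set.range fam2) := by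
  apply le_antisymm
  · apply component_le
    intro d hw
    rw [weight_eval] at hw
    obtain ⟨a, b, c, rfl⟩ : ∃ a b c, d = E a b c := ⟨d 0, d 1, d 2, fin3ext d⟩
    simp only [E_apply0, E_apply1, E_apply2] at hw
    have hb : b = 0 ∨ b = 1 := by omega
    rcases hb with rfl | rfl
    · have hc : c = 0 ∨ c = 1 := by omega
      rcases hc with rfl | rfl
      · obtain rfl : a = 2 := by omega
        exact Submodule.subset_span ⟨0, rfl⟩
      · obtain rfl : a = 0 := by omega
        exact Submodule.subset_span ⟨2, rfl⟩
    · have hc : c = 0 := by omega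
      rcases hc with rfl
      obtain rfl : a = 0 := by omega
      exact Submodule.subset_span ⟨1, rfl⟩
  · rw [Submodule.span_le]
    rintro x ⟨j, rfl⟩
    fin_cases j
    · exact vv_mem 2 0 0 2 (by norm_num)
    · exact vv_mem 0 1 0 2 (by norm_num)
    · exact vv_mem 0 0 1 2 (by norm_num)

lemma span_comp3 : component 3 = Submodule.span ℚ (Set.range fam3) := by
  apply le_antisymm
  · apply component_le
    intro d hw
    rw [weight_eval] at hw
    obtain ⟨a, b, c, rfl⟩ : ∃ a b c, d = E a b c := ⟨d 0, d 1, d 2, fin3ext d⟩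
    simp only [E_apply0, E_apply1, E_apply2] at hw
    have hb : b = 0 ∨ b = 1 := by omega
    rcases hb with rfl | rfl
    · have hc : c = 0 ∨ c = 1 := by omega
      rcases hc with rfl | rfl
      · obtain rfl : a = 3 := by omega
        exact Submodule.subset_span ⟨0, rfl⟩
      · obtain rfl : a = 1 := by omega
        exact Submodule.subset_span ⟨2, rfl⟩
    · have hc : c = 0 := by omega
      rcases hc with rfl
      obtain rfl : a = 1 := by omega
      exact Submodule.subset_span ⟨1, rfl⟩
  · rw [Submodule.span_le]
    rintro x ⟨j, rfl⟩
    fin_cases j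
    · exact vv_mem 3 0 0 3 (by norm_num)
    · exact vv_mem 1 1 0 3 (by norm_num)
    · exact vv_mem 1 0 1 3 (by norm_num)

lemma span_comp4 : component 4 = Submodule.span ℚ (Set.range fam4) := by
  apply le_antisymm
  · apply component_le
    intro d hw
    rw [weight_eval] at hw
    obtain ⟨a, b, c, rfl⟩ : ∃ a b c, d = E a b c := ⟨d 0, d 1, d 2, fin3ext d⟩
    simp only [E_apply0, E_apply1, E_apply2] at hw
    have hb : b = 0 ∨ b = 1 ∨ b = 2 := by omega
    rcases hb with rfl | rfl | rfl
    · have hc : c = 0 ∨ c = 1 ∨ c = 2 := by omega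
      rcases hc with rfl | rfl | rfl
      · obtain rfl : a = 4 := by omega
        have hr := red3 (L := 1) (c1 := 3) (c2 := 9) (c3 := -3)
          (p := monomial (E 4 0 0) 1)
          (p1 := monomial (E 0 0 2) 1) (p2 := monomial (E 0 1 1) 1)
          (p3 := monomial (E 0 2 0) 1) (by norm_num)
          (mem_J (q1 := (0 : PN)) (q2 := (0 : PN))
          (q3 := (1 : PN)) (q4 := (0 : PN)) (q5 := (0 : PN))
          (by simp only [monoX1, map_ofNat, map_one, map_neg, map_zero]; ring))
        rw [hr]
        exact add_mem (add_mem (Submodule.smul_mem _ _ (Submodule.subset_span ⟨0, rfl⟩))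
          (Submodule.smul_mem _ _ (Submodule.subset_span ⟨1, rfl⟩)))
          (Submodule.smul_mem _ _ (Submodule.subset_span ⟨2, rfl⟩))
      · obtain rfl : a = 2 := by omega
        have hr := red3 (L := 1) (c1 := 3) (c2 := 0) (c3 := 0)
          (p := monomial (E 2 0 1) 1)
          (p1 := monomial (E 0 0 2) 1) (p2 := monomial (E 0 1 1) 1)
          (p3 := monomial (E 0 2 0) 1) (by norm_num)
          (mem_J (q1 := (1 : PN)) (q2 := (0 : PN))
          (q3 := (0 : PN)) (q4 := (0 : PN)) (q5 := (0 : PN))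
          (by simp only [monoX1, map_ofNat, map_one, map_neg, map_zero]; ring))
        rw [hr]
        exact add_mem (add_mem (Submodule.smul_mem _ _ (Submodule.subset_span ⟨0, rfl⟩))
          (Submodule.smul_mem _ _ (Submodule.subset_span ⟨1, rfl⟩)))
          (Submodule.smul_mem _ _ (Submodule.subset_span ⟨2, rfl⟩))
      · obtain rfl : a = 0 := by omega
        exact Submodule.subset_span ⟨0, rfl⟩
    · have hc : c = 0 ∨ c = 1 := by omega
      rcases hc with rfl | rfl
      · obtain rfl : a = 2 := by omega
        have hr := red3 (L := 1) (c1 := 3) (c2 := 1) (c3 := 0)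
          (p := monomial (E 2 1 0) 1)
          (p1 := monomial (E 0 0 2) 1) (p2 := monomial (E 0 1 1) 1)
          (p3 := monomial (E 0 2 0) 1) (by norm_num)
          (mem_J (q1 := (0 : PN)) (q2 := (1 : PN))
          (q3 := (0 : PN)) (q4 := (0 : PN)) (q5 := (0 : PN))
          (by simp only [monoX1, map_ofNat, map_one, map_neg, map_zero]; ring))
        rw [hr]
        exact add_mem (add_mem (Submodule.smul_mem _ _ (Submodule.subset_span ⟨0, rfl⟩))
          (Submodule.smul_mem _ _ (Submodule.subset_span ⟨1, rfl⟩)))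
          (Submodule.smul_mem _ _ (Submodule.subset_span ⟨2, rfl⟩))
      · obtain rfl : a = 0 := by omega
        exact Submodule.subset_span ⟨1, rfl⟩
    · have hc : c = 0 := by omega
      rcases hc with rfl
      obtain rfl : a = 0 := by omega
      exact Submodule.subset_span ⟨2, rfl⟩
  · rw [Submodule.span_le]
    rintro x ⟨j, rfl⟩
    fin_cases j
    · exact vv_mem 0 0 2 4 (by norm_num)
    · exact vv_mem 0 1 1 4 (by norm_num)
    · exact vv_mem 0 2 0 4 (by norm_num)

lemma span_comp5 : component 5 = Submodule.span ℚ (Set.range fam5) := by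
  apply le_antisymm
  · apply component_le
    intro d hw
    rw [weight_eval] at hw
    obtain ⟨a, b, c, rfl⟩ : ∃ a b c, d = E a b c := ⟨d 0, d 1, d 2, fin3ext d⟩
    simp only [E_apply0, E_apply1, E_apply2] at hw
    have hb : b = 0 ∨ b = 1 ∨ b = 2 := by omega
    rcases hb with rfl | rfl | rfl
    · have hc : c = 0 ∨ c = 1 ∨ c = 2 := by omega
      rcases hc with rfl | rfl | rfl
      · obtain rfl : a = 5 := by omega
        have hr := red1 (L := 2) (c1 := 19)
          (p := monomial (E 5 0 0) 1)
          (p1 := monomial (E 1 0 2) 1) (by norm_num)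
          (mem_J (q1 := (0 : PN)) (q2 := (0 : PN))
          (q3 := 2 * X 0 ^ 1) (q4 := (9 : PN)) (q5 := (-2 : PN))
          (by simp only [monoX1, map_ofNat, map_one, map_neg, map_zero]; ring))
        rw [hr]
        exact Submodule.smul_mem _ _ (Submodule.subset_span ⟨0, rfl⟩)
      · obtain rfl : a = 3 := by omega
        have hr := red1 (L := 1) (c1 := 3)
          (p := monomial (E 3 0 1) 1)
          (p1 := monomial (E 1 0 2) 1) (by norm_num)
          (mem_J (q1 := X 0 ^ 1) (q2 := (0 : PN))
          (q3 := (0 : PN)) (q4 := (0 : PN)) (q5 := (0 : PN))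
          (by simp only [monoX1, map_ofNat, map_one, map_neg, map_zero]; ring))
        rw [hr]
        exact Submodule.smul_mem _ _ (Submodule.subset_span ⟨0, rfl⟩)
      · obtain rfl : a = 1 := by omega
        exact Submodule.subset_span ⟨0, rfl⟩
    · have hc : c = 0 ∨ c = 1 := by omega
      rcases hc with rfl | rfl
      · obtain rfl : a = 3 := by omega
        have hr := red1 (L := 2) (c1 := 9)
          (p := monomial (E 3 1 0) 1)
          (p1 := monomial (E 1 0 2) 1) (by norm_num)
          (mem_J (q1 := (0 : PN)) (q2 := 2 * X 0 ^ 1)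
          (q3 := (0 : PN)) (q4 := (1 : PN)) (q5 := (0 : PN))
          (by simp only [monoX1, map_ofNat, map_one, map_neg, map_zero]; ring))
        rw [hr]
        exact Submodule.smul_mem _ _ (Submodule.subset_span ⟨0, rfl⟩)
      · obtain rfl : a = 1 := by omega
        have hr := red1 (L := 2) (c1 := 3)
          (p := monomial (E 1 1 1) 1)
          (p1 := monomial (E 1 0 2) 1) (by norm_num)
          (mem_J (q1 := (0 : PN)) (q2 := (0 : PN))
          (q3 := (0 : PN)) (q4 := (1 : PN)) (q5 := (0 : PN))
          (by simp only [monoX1, map_ofNat, map_one, map_neg, map_zero]; ring))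
        rw [hr]
        exact Submodule.smul_mem _ _ (Submodule.subset_span ⟨0, rfl⟩)
    · have hc : c = 0 := by omega
      rcases hc with rfl
      obtain rfl : a = 1 := by omega
      have hr := red1 (L := 3) (c1 := 7)
        (p := monomial (E 1 2 0) 1)
        (p1 := monomial (E 1 0 2) 1) (by norm_num)
        (mem_J (q1 := (0 : PN)) (q2 := (0 : PN))
        (q3 := (0 : PN)) (q4 := (0 : PN)) (q5 := (1 : PN))
        (by simp only [monoX1, map_ofNat, map_one, map_neg, map_zero]; ring))
      rw [hr]
      exact Submodule.smul_mem _ _ (Submodule.subset_span ⟨0, rfl⟩)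
  · rw [Submodule.span_le]
    rintro x ⟨j, rfl⟩
    fin_cases j
    · exact vv_mem 1 0 2 5 (by norm_num)

lemma span_comp6 : component 6 = Submodule.span ℚ (Set.range fam6) := by
  apply le_antisymm
  · apply component_le
    intro d hw
    rw [weight_eval] at hw
    obtain ⟨a, b, c, rfl⟩ : ∃ a b c, d = E a b c := ⟨d 0, d 1, d 2, fin3ext d⟩
    simp only [E_apply0, E_apply1, E_apply2] at hw
    have hb : b = 0 ∨ b = 1 ∨ b = 2 ∨ b = 3 := by omega
    rcases hb with rfl | rfl | rfl | rfl
    · have hc : c = 0 ∨ c = 1 ∨ c = 2 ∨ c = 3 := by omega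
      rcases hc with rfl | rfl | rfl | rfl
      · obtain rfl : a = 6 := by omega
        have hr := red1 (L := 2) (c1 := 57)
          (p := monomial (E 6 0 0) 1)
          (p1 := monomial (E 0 0 3) 1) (by norm_num)
          (mem_J (q1 := 12 * X 2 ^ 1 + 9 * X 1 ^ 1 + 2 * X 0 ^ 2) (q2 := 9 * X 2 ^ 1 + (-6) * X 1 ^ 1)
          (q3 := (-2) * X 2 ^ 1 + 2 * X 0 ^ 2) (q4 := (0 : PN)) (q5 := (0 : PN))
          (by simp only [monoX1, map_ofNat, map_one, map_neg, map_zero]; ring))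
        rw [hr]
        exact Submodule.smul_mem _ _ (Submodule.subset_span ⟨0, rfl⟩)
      · obtain rfl : a = 4 := by omega
        have hr := red1 (L := 1) (c1 := 9)
          (p := monomial (E 4 0 1) 1)
          (p1 := monomial (E 0 0 3) 1) (by norm_num)
          (mem_J (q1 := 3 * X 2 ^ 1 + X 0 ^ 2) (q2 := (0 : PN))
          (q3 := (0 : PN)) (q4 := (0 : PN)) (q5 := (0 : PN))
          (by simp only [monoX1, map_ofNat, map_one, map_neg, map_zero]; ring))
        rw [hr]
        exact Submodule.smul_mem _ _ (Submodule.subset_span ⟨0, rfl⟩)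
      · obtain rfl : a = 2 := by omega
        have hr := red1 (L := 1) (c1 := 3)
          (p := monomial (E 2 0 2) 1)
          (p1 := monomial (E 0 0 3) 1) (by norm_num)
          (mem_J (q1 := X 2 ^ 1) (q2 := (0 : PN))
          (q3 := (0 : PN)) (q4 := (0 : PN)) (q5 := (0 : PN))
          (by simp only [monoX1, map_ofNat, map_one, map_neg, map_zero]; ring))
        rw [hr]
        exact Submodule.smul_mem _ _ (Submodule.subset_span ⟨0, rfl⟩)
      · obtain rfl : a = 0 := by omega
        exact Submodule.subset_span ⟨0, rfl⟩
    · have hc : c = 0 ∨ c = 1 ∨ c = 2 := by omega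
      rcases hc with rfl | rfl | rfl
      · obtain rfl : a = 4 := by omega
        have hr := red1 (L := 2) (c1 := 27)
          (p := monomial (E 4 1 0) 1)
          (p1 := monomial (E 0 0 3) 1) (by norm_num)
          (mem_J (q1 := 6 * X 2 ^ 1 + (-1) * X 1 ^ 1) (q2 := 3 * X 2 ^ 1 + 2 * X 0 ^ 2)
          (q3 := (0 : PN)) (q4 := (0 : PN)) (q5 := (0 : PN))
          (by simp only [monoX1, map_ofNat, map_one, map_neg, map_zero]; ring))
        rw [hr]
        exact Submodule.smul_mem _ _ (Submodule.subset_span ⟨0, rfl⟩)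
      · obtain rfl : a = 2 := by omega
        have hr := red1 (L := 2) (c1 := 9)
          (p := monomial (E 2 1 1) 1)
          (p1 := monomial (E 0 0 3) 1) (by norm_num)
          (mem_J (q1 := (-1) * X 1 ^ 1) (q2 := 3 * X 2 ^ 1)
          (q3 := (0 : PN)) (q4 := (0 : PN)) (q5 := (0 : PN))
          (by simp only [monoX1, map_ofNat, map_one, map_neg, map_zero]; ring))
        rw [hr]
        exact Submodule.smul_mem _ _ (Submodule.subset_span ⟨0, rfl⟩)
      · obtain rfl : a = 0 := by omega
        have hr := red1 (L := 2) (c1 := 3)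
          (p := monomial (E 0 1 2) 1)
          (p1 := monomial (E 0 0 3) 1) (by norm_num)
          (mem_J (q1 := (-1) * X 1 ^ 1) (q2 := X 2 ^ 1)
          (q3 := (0 : PN)) (q4 := (0 : PN)) (q5 := (0 : PN))
          (by simp only [monoX1, map_ofNat, map_one, map_neg, map_zero]; ring))
        rw [hr]
        exact Submodule.smul_mem _ _ (Submodule.subset_span ⟨0, rfl⟩)
    · have hc : c = 0 ∨ c = 1 := by omega
      rcases hc with rfl | rfl
      · obtain rfl : a = 2 := by omega
        have hr := red1 (L := 3) (c1 := 21)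
          (p := monomial (E 2 2 0) 1)
          (p1 := monomial (E 0 0 3) 1) (by norm_num)
          (mem_J (q1 := (-3) * X 2 ^ 1 + (-9) * X 1 ^ 1 + (-1) * X 0 ^ 2) (q2 := 9 * X 2 ^ 1 + 3 * X 1 ^ 1)
          (q3 := X 2 ^ 1) (q4 := (0 : PN)) (q5 := (0 : PN))
          (by simp only [monoX1, map_ofNat, map_one, map_neg, map_zero]; ring))
        rw [hr]
        exact Submodule.smul_mem _ _ (Submodule.subset_span ⟨0, rfl⟩)
      · obtain rfl : a = 0 := by omega
        have hr := red1 (L := 6) (c1 := 15)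
          (p := monomial (E 0 2 1) 1)
          (p1 := monomial (E 0 0 3) 1) (by norm_num)
          (mem_J (q1 := (-6) * X 2 ^ 1 + (-9) * X 1 ^ 1 + (-2) * X 0 ^ 2) (q2 := 9 * X 2 ^ 1)
          (q3 := 2 * X 2 ^ 1) (q4 := (0 : PN)) (q5 := (0 : PN))
          (by simp only [monoX1, map_ofNat, map_one, map_neg, map_zero]; ring))
        rw [hr]
        exact Submodule.smul_mem _ _ (Submodule.subset_span ⟨0, rfl⟩)
    · have hc : c = 0 := by omega
      rcases hc with rfl
      obtain rfl : a = 0 := by omega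
      have hr := red1 (L := 6) (c1 := 27)
        (p := monomial (E 0 3 0) 1)
        (p1 := monomial (E 0 0 3) 1) (by norm_num)
        (mem_J (q1 := (-24) * X 2 ^ 1 + (-29) * X 1 ^ 1 + (-6) * X 0 ^ 2) (q2 := 27 * X 2 ^ 1 + (-2) * X 0 ^ 2)
        (q3 := 6 * X 2 ^ 1 + 2 * X 1 ^ 1) (q4 := (0 : PN)) (q5 := (0 : PN))
        (by simp only [monoX1, map_ofNat, map_one, map_neg, map_zero]; ring))
      rw [hr]
      exact Submodule.smul_mem _ _ (Submodule.subset_span ⟨0, rfl⟩)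
  · rw [Submodule.span_le]
    rintro x ⟨j, rfl⟩
    fin_cases j
    · exact vv_mem 0 0 3 6 (by norm_num)

lemma indep0 : LinearIndependent ℚ fam0 := by
  rw [Fintype.linearIndependent_iff]
  intro g hg
  rw [Fin.sum_univ_one, fam0_0] at hg
  have h0 : (Ideal.Quotient.mkₐ ℚ J) (g 0 • monomial (E 0 0 0) (1:ℚ)) = 0 := by
    rw [map_smul]; exact hg
  have hq : g 0 • monomial (E 0 0 0) (1:ℚ) ∈ J := by
    rw [Ideal.Quotient.mkₐ_eq_mk] at h0
    exact Ideal.Quotient.eq_zero_iff_mem.mp h0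
  have e1 := K_spec (hJK hq) (monomial (E 0 0 3) 1)
  simp only [smul_mul_assoc, coeff_smul, smul_eq_mul, pair0_0_0] at e1
  have hg0 : g 0 = 0 := by linear_combination ((1 : ℚ)/2) * e1
  intro j
  fin_cases j
  exact hg0

lemma indep1 : LinearIndependent ℚ fam1 := by
  rw [Fintype.linearIndependent_iff]
  intro g hg
  rw [Fin.sum_univ_one, fam1_0] at hg
  have h0 : (Ideal.Quotient.mkₐ ℚ J) (g 0 • monomial (E 1 0 0) (1:ℚ)) = 0 := by
    rw [map_smul]; exact hg
  have hq : g 0 • monomial (E 1 0 0) (1:ℚ) ∈ J := by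
    rw [Ideal.Quotient.mkₐ_eq_mk] at h0
    exact Ideal.Quotient.eq_zero_iff_mem.mp h0
  have e1 := K_spec (hJK hq) (monomial (E 1 0 2) 1)
  simp only [smul_mul_assoc, coeff_smul, smul_eq_mul, pair1_0_0] at e1
  have hg0 : g 0 = 0 := by linear_combination ((1 : ℚ)/6) * e1
  intro j
  fin_cases j
  exact hg0

lemma indep2 : LinearIndependent ℚ fam2 := by
  rw [Fintype.linearIndependent_iff]
  intro g hg
  rw [Fin.sum_univ_three, fam2_0, fam2_1, fam2_2] at hg
  have h0 : (Ideal.Quotient.mkₐ ℚ J) (g 0 • monomial (E 2 0 0) (1:ℚ) + g 1 • monomial (E 0 1 0) (1:ℚ) + g 2 • monomial (E 0 0 1) (1:ℚ)) = 0 := by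
    rw [map_add, map_add, map_smul, map_smul, map_smul]; exact hg
  have hq : (g 0 • monomial (E 2 0 0) (1:ℚ) + g 1 • monomial (E 0 1 0) (1:ℚ) + g 2 • monomial (E 0 0 1) (1:ℚ)) ∈ J := by
    rw [Ideal.Quotient.mkₐ_eq_mk] at h0
    exact Ideal.Quotient.eq_zero_iff_mem.mp h0
  have hKq := hJK hq
  have e1 := K_spec hKq (monomial (E 0 0 2) 1)
  have e2 := K_spec hKq (monomial (E 0 1 1) 1)
  have e3 := K_spec hKq (monomial (E 0 2 0) 1)
  simp only [add_mul, smul_mul_assoc, coeff_add, coeff_smul, smul_eq_mul, pair2_0_0, pair2_0_1, pair2_0_2, pair2_1_0, pair2_1_1, pair2_1_2, pair2_2_0, pair2_2_1, pair2_2_2] at e1 e2 e3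
  have hg0 : g 0 = 0 := by linear_combination (-2 : ℚ) * e1 + (3 : ℚ) * e2 + (-1 : ℚ) * e3
  have hg1 : g 1 = 0 := by linear_combination (-3 : ℚ) * e1 + (2 : ℚ) * e2 + (0 : ℚ) * e3
  have hg2 : g 2 = 0 := by linear_combination (11 : ℚ) * e1 + (-12 : ℚ) * e2 + (3 : ℚ) * e3
  intro j
  fin_cases j
  · exact hg0
  · exact hg1
  · exact hg2

lemma indep3 : LinearIndependent ℚ fam3 := by
  rw [Fintype.linearIndependent_iff]
  intro g hg
  rw [Fin.sum_univ_three, fam3_0, fam3_1, fam3_2] at hg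
  have h0 : (Ideal.Quotient.mkₐ ℚ J) (g 0 • monomial (E 3 0 0) (1:ℚ) + g 1 • monomial (E 1 1 0) (1:ℚ) + g 2 • monomial (E 1 0 1) (1:ℚ)) = 0 := by
    rw [map_add, map_add, map_smul, map_smul, map_smul]; exact hg
  have hq : (g 0 • monomial (E 3 0 0) (1:ℚ) + g 1 • monomial (E 1 1 0) (1:ℚ) + g 2 • monomial (E 1 0 1) (1:ℚ)) ∈ J := by
    rw [Ideal.Quotient.mkₐ_eq_mk] at h0
    exact Ideal.Quotient.eq_zero_iff_mem.mp h0
  have hKq := hJK hq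
  have e1 := K_spec hKq (monomial (E 3 0 0) 1)
  have e2 := K_spec hKq (monomial (E 1 1 0) 1)
  have e3 := K_spec hKq (monomial (E 1 0 1) 1)
  simp only [add_mul, smul_mul_assoc, coeff_add, coeff_smul, smul_eq_mul, pair3_0_0, pair3_0_1, pair3_0_2, pair3_1_0, pair3_1_1, pair3_1_2, pair3_2_0, pair3_2_1, pair3_2_2] at e1 e2 e3
  have hg0 : g 0 = 0 := by linear_combination ((1 : ℚ)/3) * e1 + (0 : ℚ) * e2 + (-1 : ℚ) * e3
  have hg1 : g 1 = 0 := by linear_combination (0 : ℚ) * e1 + (2 : ℚ) * e2 + (-3 : ℚ) * e3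
  have hg2 : g 2 = 0 := by linear_combination (-1 : ℚ) * e1 + (-3 : ℚ) * e2 + ((23 : ℚ)/3) * e3
  intro j
  fin_cases j
  · exact hg0
  · exact hg1
  · exact hg2

lemma indep4 : LinearIndependent ℚ fam4 := by
  rw [Fintype.linearIndependent_iff]
  intro g hg
  rw [Fin.sum_univ_three, fam4_0, fam4_1, fam4_2] at hg
  have h0 : (Ideal.Quotient.mkₐ ℚ J) (g 0 • monomial (E 0 0 2) (1:ℚ) + g 1 • monomial (E 0 1 1) (1:ℚ) + g 2 • monomial (E 0 2 0) (1:ℚ)) = 0 := by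
    rw [map_add, map_add, map_smul, map_smul, map_smul]; exact hg
  have hq : (g 0 • monomial (E 0 0 2) (1:ℚ) + g 1 • monomial (E 0 1 1) (1:ℚ) + g 2 • monomial (E 0 2 0) (1:ℚ)) ∈ J := by
    rw [Ideal.Quotient.mkₐ_eq_mk] at h0
    exact Ideal.Quotient.eq_zero_iff_mem.mp h0
  have hKq := hJK hq
  have e1 := K_spec hKq (monomial (E 2 0 0) 1)
  have e2 := K_spec hKq (monomial (E 0 1 0) 1)
  have e3 := K_spec hKq (monomial (E 0 0 1) 1)
  simp only [add_mul, smul_mul_assoc, coeff_add, coeff_smul, smul_eq_mul, pair4_0_0, pair4_0_1, pair4_0_2, pair4_1_0, pair4_1_1, pair4_1_2, pair4_2_0, pair4_2_1, pair4_2_2] at e1 e2 e3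
  have hg0 : g 0 = 0 := by linear_combination (-2 : ℚ) * e1 + (-3 : ℚ) * e2 + (11 : ℚ) * e3
  have hg1 : g 1 = 0 := by linear_combination (3 : ℚ) * e1 + (2 : ℚ) * e2 + (-12 : ℚ) * e3
  have hg2 : g 2 = 0 := by linear_combination (-1 : ℚ) * e1 + (0 : ℚ) * e2 + (3 : ℚ) * e3
  intro j
  fin_cases j
  · exact hg0
  · exact hg1
  · exact hg2

lemma indep5 : LinearIndependent ℚ fam5 := by
  rw [Fintype.linearIndependent_iff]
  intro g hg
  rw [Fin.sum_univ_one, fam5_0] at hg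
  have h0 : (Ideal.Quotient.mkₐ ℚ J) (g 0 • monomial (E 1 0 2) (1:ℚ)) = 0 := by
    rw [map_smul]; exact hg
  have hq : g 0 • monomial (E 1 0 2) (1:ℚ) ∈ J := by
    rw [Ideal.Quotient.mkₐ_eq_mk] at h0
    exact Ideal.Quotient.eq_zero_iff_mem.mp h0
  have e1 := K_spec (hJK hq) (monomial (E 1 0 0) 1)
  simp only [smul_mul_assoc, coeff_smul, smul_eq_mul, pair5_0_0] at e1
  have hg0 : g 0 = 0 := by linear_combination ((1 : ℚ)/6) * e1
  intro j
  fin_cases j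
  exact hg0

lemma indep6 : LinearIndependent ℚ fam6 := by
  rw [Fintype.linearIndependent_iff]
  intro g hg
  rw [Fin.sum_univ_one, fam6_0] at hg
  have h0 : (Ideal.Quotient.mkₐ ℚ J) (g 0 • monomial (E 0 0 3) (1:ℚ)) = 0 := by
    rw [map_smul]; exact hg
  have hq : g 0 • monomial (E 0 0 3) (1:ℚ) ∈ J := by
    rw [Ideal.Quotient.mkₐ_eq_mk] at h0
    exact Ideal.Quotient.eq_zero_iff_mem.mp h0
  have e1 := K_spec (hJK hq) (monomial (E 0 0 0) 1)
  simp only [smul_mul_assoc, coeff_smul, smul_eq_mul, pair6_0_0] at e1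
  have hg0 : g 0 = 0 := by linear_combination ((1 : ℚ)/2) * e1
  intro j
  fin_cases j
  exact hg0

lemma frank0 : Module.finrank ℚ (component 0) = 1 := by
  rw [span_comp0, finrank_span_eq_card indep0]
  simp

lemma frank1 : Module.finrank ℚ (component 1) = 1 := by
  rw [span_comp1, finrank_span_eq_card indep1]
  simp

lemma frank2 : Module.finrank ℚ (component 2) = 3 := by
  rw [span_comp2, finrank_span_eq_card indep2]
  simp

lemma frank3 : Module.finrank ℚ (component 3) = 3 := by
  rw [span_comp3, finrank_span_eq_card indep3]
  simp

lemma frank4 : Module.finrank ℚ (component 4) = 3 := by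
  rw [span_comp4, finrank_span_eq_card indep4]
  simp

lemma frank5 : Module.finrank ℚ (component 5) = 1 := by
  rw [span_comp5, finrank_span_eq_card indep5]
  simp

lemma frank6 : Module.finrank ℚ (component 6) = 1 := by
  rw [span_comp6, finrank_span_eq_card indep6]
  simp

/-- The Hilbert series of R_N is 1 + t + 3t² + 3t³ + 3t⁴ + t⁵ + t⁶. -/
theorem hilbert_series_RN :
    (∀ i : ℕ, Module.finrank ℚ (component i) = [1, 1, 3, 3, 3, 1, 1].getD i 0) ∧
    ∀ i : ℕ, 6 < i → component i = ⊥ := by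
  constructor
  · intro i
    by_cases hi : i ≤ 6
    · interval_cases i
      · simpa using frank0
      · simpa using frank1
      · simpa using frank2
      · simpa using frank3
      · simpa using frank4
      · simpa using frank5
      · simpa using frank6
    · push_neg at hi
      have h2 : [1, 1, 3, 3, 3, 1, 1].getD i 0 = 0 := List.getD_eq_default _ _ (by simp; omega)
      rw [component_eq_bot hi, h2, finrank_bot]
  · intro i hi
    exact component_eq_bot hi
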